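/- Let (X,d) be a compact metric space and f: X → X continuous. (X,f) satisfies property P_e (every nonempty closed internally chain transitive set A admits a full trajectory ⟨x_i⟩_{i∈ℤ} with α(⟨x_i⟩) = ω(⟨x_i⟩) = A) if and only if (X,f) has γ-restricted two-sided orbital limit shadowing. -/

import Mathlib

open Filter Metric Topology Set

def omegaSeq {X : Type*} [MetricSpace X] (u : ℕ → X) : Set X :=
  ⋂ M : ℕ, closure (u '' Set.Ioi M)

def omegaPt {X : Type*} [MetricSpace X] (f : X → X) (x : X) : Set X :=
  omegaSeq (fun n => f^[n] x)

def omegaZ {X : Type*} [MetricSpace X] (u : ℤ → X) : Set X :=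
  ⋂ M : ℕ, closure (u '' {n : ℤ | (M : ℤ) < n})

def alphaZ {X : Type*} [MetricSpace X] (u : ℤ → X) : Set X :=
  ⋂ M : ℕ, closure (u '' {n : ℤ | n < -(M : ℤ)})

/-- `A` is internally chain transitive for `f`. -/
def chainTransitive {X : Type*} [MetricSpace X] (f : X → X) (A : Set X) : Prop :=
  ∀ a ∈ A, ∀ b ∈ A, ∀ δ > (0:ℝ), ∃ N : ℕ, 1 ≤ N ∧ ∃ y : ℕ → X,
    y 0 = a ∧ y N = b ∧ (∀ i ≤ N, y i ∈ A) ∧ ∀ i < N, dist (f (y i)) (y (i+1)) < δ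

/-- `u` is a full trajectory of `f`. -/
def fullTraj {X : Type*} (f : X → X) (u : ℤ → X) : Prop := ∀ i : ℤ, f (u i) = u (i + 1)

/-- `u` is a two-sided asymptotic pseudo-orbit of `f`. -/
def twoSidedAsymptotic {X : Type*} [MetricSpace X] (f : X → X) (u : ℤ → X) : Prop :=
  Filter.Tendsto (fun i : ℤ => dist (f (u i)) (u (i + 1))) Filter.atTop (nhds 0) ∧
  Filter.Tendsto (fun i : ℤ => dist (f (u i)) (u (i + 1))) Filter.atBot (nhds 0)

/-- The γ-limit set of a point. -/
def gammaLimit {X : Type*} [MetricSpace X] (f : X → X) (x : X) : Set X :=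
  {y | y ∈ omegaPt f x ∧ ∃ (ys : ℕ → X) (ns : ℕ → ℕ), StrictMono ns ∧
    (∀ i, f^[ns i] (ys i) = x) ∧ Filter.Tendsto ys Filter.atTop (nhds y)}

/-! The ω-limit set of an asymptotic pseudo-orbit is nonempty, closed and internally chain
transitive, so property `P_e` realises it as the α- and ω-limit set of a trajectory. Conversely,
a nonempty closed internally chain transitive set `A` is the ω-limit set of the forward
pseudo-orbit obtained by concatenating chains of ever finer precision through a dense sequence of
`A` visited infinitely often, and reversed chains give a backward half with α-limit set `A`;
shadowing the glued two-sided pseudo-orbit yields the required trajectory. -/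

section Concat

variable (N : ℕ → ℕ)

/- A position `(n, i)` is the `i`-th point of the `n`-th chain, which has length `N n`. -/
def concatStep (q : ℕ × ℕ) : ℕ × ℕ :=
  if q.2 + 1 < N q.1 then (q.1, q.2 + 1) else (q.1 + 1, 0)

def concatPos (m : ℕ) : ℕ × ℕ := (concatStep N)^[m] (0, 0)

variable {N}

lemma concatPos_succ (m : ℕ) : concatPos N (m + 1) = concatStep N (concatPos N m) :=
  Function.iterate_succ_apply' _ _ _

lemma concatPos_snd_lt (hN : ∀ n, 1 ≤ N n) (m : ℕ) : (concatPos N m).2 < N (concatPos N m).1 := by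
  induction m with
  | zero => exact hN 0
  | succ m _ =>
    rw [concatPos_succ, concatStep]
    split_ifs with h
    · exact h
    · exact hN _

lemma monotone_concatPos_fst : Monotone fun m => (concatPos N m).1 := by
  refine monotone_nat_of_le_succ fun m => ?_
  rw [concatPos_succ, concatStep]
  split_ifs <;> simp

lemma iterate_concatStep_of_lt {n k : ℕ} (hk : k < N n) : (concatStep N)^[k] (n, 0) = (n, k) := by
  induction k with
  | zero => rfl
  | succ k ih =>
    rw [Function.iterate_succ_apply', ih (by omega)]
    simp [concatStep, hk]

lemma iterate_concatStep_self (hN : ∀ n, 1 ≤ N n) (n : ℕ) :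
    (concatStep N)^[N n] (n, 0) = (n + 1, 0) := by
  obtain ⟨k, hk⟩ : ∃ k, N n = k + 1 := ⟨N n - 1, by have := hN n; omega⟩
  rw [hk, Function.iterate_succ_apply', iterate_concatStep_of_lt (by omega)]
  simp [concatStep, hk]

lemma exists_concatPos_eq (hN : ∀ n, 1 ≤ N n) (n : ℕ) : ∃ m ≥ n, concatPos N m = (n, 0) := by
  induction n with
  | zero => exact ⟨0, le_rfl, rfl⟩
  | succ n ih =>
    obtain ⟨m, hm, hpos⟩ := ih
    refine ⟨N n + m, by have := hN n; omega, ?_⟩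
    rw [concatPos, Function.iterate_add_apply, ← concatPos, hpos, iterate_concatStep_self hN]

/-- `κ m` is the chain in which the `m`-th step of the concatenation `p` is taken. -/
theorem exists_concat_chains {X : Type*} (hN : ∀ n, 1 ≤ N n) (y : ℕ → ℕ → X)
    (hy : ∀ n, y n (N n) = y (n + 1) 0) :
    ∃ (p : ℕ → X) (κ : ℕ → ℕ), Tendsto κ atTop atTop ∧
      (∀ m, ∃ i < N (κ m), p m = y (κ m) i ∧ p (m + 1) = y (κ m) (i + 1)) ∧
      ∀ n, ∃ m ≥ n, p m = y n 0 := by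
  refine ⟨fun m => y (concatPos N m).1 (concatPos N m).2, fun m => (concatPos N m).1,
    tendsto_atTop_atTop_of_monotone monotone_concatPos_fst fun n => ?_, fun m => ?_, fun n => ?_⟩
  · obtain ⟨m, -, hm⟩ := exists_concatPos_eq hN n
    exact ⟨m, by simp [hm]⟩
  · refine ⟨_, concatPos_snd_lt hN m, rfl, ?_⟩
    dsimp only
    rw [concatPos_succ, concatStep]
    split_ifs with h
    · rfl
    · rw [← hy, show (concatPos N m).2 + 1 = N (concatPos N m).1 by
        have := concatPos_snd_lt hN m; omega]
  · obtain ⟨m, hm, hpos⟩ := exists_concatPos_eq hN n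
    exact ⟨m, hm, by simp [hpos]⟩

end Concat

section OmegaSeq

variable {X : Type*} [MetricSpace X]

lemma isClosed_omegaSeq (v : ℕ → X) : IsClosed (omegaSeq v) :=
  isClosed_iInter fun _ => isClosed_closure

lemma mem_omegaSeq_iff_mapClusterPt {v : ℕ → X} {x : X} :
    x ∈ omegaSeq v ↔ MapClusterPt x atTop v := by
  rw [mapClusterPt_atTop_iff_forall_mem_closure, omegaSeq, mem_iInter]
  refine ⟨fun h M => closure_mono (image_mono Ioi_subset_Ici_self) (h M), fun h M => ?_⟩
  exact closure_mono (image_mono fun n (hn : M + 1 ≤ n) => (show M < n by omega)) (h (M + 1))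

lemma omegaSeq_nonempty [CompactSpace X] (v : ℕ → X) : (omegaSeq v).Nonempty := by
  obtain ⟨x, -, hx⟩ := isCompact_univ.exists_mapClusterPt (f := atTop) (u := v) (by simp)
  exact ⟨x, mem_omegaSeq_iff_mapClusterPt.2 hx⟩

lemma eventually_exists_dist_omegaSeq_lt [CompactSpace X] (v : ℕ → X) {ε : ℝ} (hε : 0 < ε) :
    ∀ᶠ n in atTop, ∃ a ∈ omegaSeq v, dist (v n) a < ε := by
  have hv : Tendsto v atTop (𝓝ˢ (omegaSeq v)) :=
    isCompact_univ.tendsto_nhdsSet_of_mapClusterPt (by simp)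
      fun x _ hx => mem_omegaSeq_iff_mapClusterPt.2 hx
  filter_upwards [hv ((isOpen_thickening).mem_nhdsSet.2 (self_subset_thickening hε _))] with n hn
  exact mem_thickening_iff.1 hn

/-- The chain from `a` to `b` follows the pseudo-orbit `v` from a time `n₁` where it is close to `a`
to a time `n₂` where it is close to `b`, moving each point to a nearby point of `omegaSeq v`. -/
theorem chainTransitive_omegaSeq [CompactSpace X] {f : X → X} (hf : UniformContinuous f)
    {v : ℕ → X} (hv : Tendsto (fun n => dist (f (v n)) (v (n + 1))) atTop (𝓝 0)) :
    chainTransitive f (omegaSeq v) := by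
  intro a ha b hb δ hδ
  obtain ⟨ε₀, hε₀, hfε₀⟩ := Metric.uniformContinuous_iff.1 hf (δ / 3) (by positivity)
  set ε := min ε₀ (δ / 3)
  have hε : 0 < ε := lt_min hε₀ (by positivity)
  obtain ⟨M, hM⟩ := eventually_atTop.1 <|
    (hv.eventually (gt_mem_nhds (show (0 : ℝ) < δ / 3 by positivity))).and
      (eventually_exists_dist_omegaSeq_lt v hε)
  obtain ⟨_, ⟨n₁, hn₁, rfl⟩, hn₁a⟩ := Metric.mem_closure_iff.1 (mem_iInter.1 ha M) ε hε
  obtain ⟨_, ⟨n₂, hn₂, rfl⟩, hn₂b⟩ := Metric.mem_closure_iff.1 (mem_iInter.1 hb n₁) ε hε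
  simp only [mem_Ioi] at hn₁ hn₂
  set N := n₂ - n₁
  choose c hcω hcv using fun i => (hM (n₁ + i) (by omega)).2
  set y : ℕ → X := fun i => if i = 0 then a else if i = N then b else c i
  have hy : ∀ i, y i ∈ omegaSeq v ∧ dist (v (n₁ + i)) (y i) < ε := by
    intro i
    simp only [y]
    split_ifs with h0 hN
    · exact ⟨ha, by rw [h0, dist_comm]; exact hn₁a⟩
    · exact ⟨hb, by rw [hN, show n₁ + N = n₂ by omega, dist_comm]; exact hn₂b⟩
    · exact ⟨hcω i, hcv i⟩
  refine ⟨N, by omega, y, rfl, by simp [y, show N ≠ 0 by omega], fun i _ => (hy i).1, fun i _ => ?_⟩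
  calc dist (f (y i)) (y (i + 1))
      ≤ dist (f (y i)) (f (v (n₁ + i))) + dist (f (v (n₁ + i))) (v (n₁ + i + 1))
          + dist (v (n₁ + i + 1)) (y (i + 1)) := dist_triangle4 _ _ _ _
    _ < δ / 3 + δ / 3 + δ / 3 := by
        gcongr
        · exact hfε₀ (lt_of_lt_of_le (by rw [dist_comm]; exact (hy i).2) (min_le_left _ _))
        · exact (hM (n₁ + i) (by omega)).1
        · exact lt_of_lt_of_le (hy (i + 1)).2 (min_le_right _ _)
    _ = δ := by ring

end OmegaSeq

/-- Internal chain transitivity of `A` when a jump from `a` to `b` costs `J a b`. The case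
`J a b = dist (f a) b` is `chainTransitive f`; its reversal `flip J` describes the backward half
of a two-sided pseudo-orbit. -/
def ChainTransitiveFor {X : Type*} (J : X → X → ℝ) (A : Set X) : Prop :=
  ∀ a ∈ A, ∀ b ∈ A, ∀ δ > (0 : ℝ), ∃ N : ℕ, 1 ≤ N ∧ ∃ y : ℕ → X,
    y 0 = a ∧ y N = b ∧ (∀ i ≤ N, y i ∈ A) ∧ ∀ i < N, J (y i) (y (i + 1)) < δ

lemma ChainTransitiveFor.flip {X : Type*} {J : X → X → ℝ} {A : Set X}
    (h : ChainTransitiveFor J A) : ChainTransitiveFor (flip J) A := by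
  intro a ha b hb δ hδ
  obtain ⟨N, hN, y, hy0, hyN, hyA, hyJ⟩ := h b hb a ha δ hδ
  refine ⟨N, hN, fun i => y (N - i), by simpa, by simpa, fun i _ => hyA _ (Nat.sub_le _ _),
    fun i hi => ?_⟩
  have := hyJ (N - (i + 1)) (by omega)
  rwa [show N - (i + 1) + 1 = N - i by omega] at this

section Construction

open TopologicalSpace

variable {X : Type*} [MetricSpace X]

lemma exists_seq_mem_subset_closure_range [SeparableSpace X] {A : Set X} (hA : A.Nonempty) :
    ∃ e : ℕ → X, (∀ j, e j ∈ A) ∧ A ⊆ closure (range e) := by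
  obtain ⟨C, hCA, hC, hAC⟩ := (IsSeparable.of_separableSpace A).exists_countable_dense_subset
  obtain ⟨e, rfl⟩ := hC.exists_eq_range (closure_nonempty_iff.1 (hA.mono hAC))
  exact ⟨e, range_subset_iff.1 hCA, hAC⟩

/-- Concatenate chains between the terms of `e n.unpair.2`, which runs through a dense sequence of
`A` infinitely often, with the `n`-th chain of precision `1 / (n + 1)`. -/
theorem ChainTransitiveFor.exists_tendsto_omegaSeq_eq [SeparableSpace X] {J : X → X → ℝ}
    (hJ : ∀ a b, 0 ≤ J a b) {A : Set X} (hct : ChainTransitiveFor J A) (hne : A.Nonempty)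
    (hA : IsClosed A) :
    ∃ p : ℕ → X, Tendsto (fun m => J (p m) (p (m + 1))) atTop (𝓝 0) ∧ omegaSeq p = A := by
  obtain ⟨e, heA, hAe⟩ := exists_seq_mem_subset_closure_range hne
  choose N hN y hy0 hyN hyA hyJ using fun n : ℕ =>
    hct (e n.unpair.2) (heA _) (e (n + 1).unpair.2) (heA _) (1 / (n + 1)) Nat.one_div_pos_of_nat
  obtain ⟨p, κ, hκ, hstep, hvisit⟩ :=
    exists_concat_chains hN y fun n => (hyN n).trans (hy0 (n + 1)).symm
  refine ⟨p, squeeze_zero (fun m => hJ _ _) (fun m => ?_)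
    (tendsto_one_div_add_atTop_nhds_zero_nat.comp hκ), Subset.antisymm ?_ ?_⟩
  · obtain ⟨i, hi, hpi, hpi'⟩ := hstep m
    rw [hpi, hpi']
    exact (hyJ _ _ hi).le
  · refine (iInter_subset _ 0).trans (closure_minimal (image_subset_iff.2 fun m _ => ?_) hA)
    obtain ⟨i, hi, hpi, -⟩ := hstep m
    rw [mem_preimage, hpi]
    exact hyA _ _ hi.le
  · refine hAe.trans (closure_minimal (range_subset_iff.2 fun j => mem_iInter.2 fun M => ?_)
      (isClosed_omegaSeq p))
    obtain ⟨m, hm, hpm⟩ := hvisit (Nat.pair (M + 1) j)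
    have := Nat.left_le_pair (M + 1) j
    exact subset_closure ⟨m, show M < m by omega, by rw [hpm, hy0, Nat.unpair_pair]⟩

lemma omegaZ_eq_omegaSeq {u : ℤ → X} {p : ℕ → X} (h : ∀ n : ℕ, u n = p n) :
    omegaZ u = omegaSeq p := by
  refine iInter_congr fun M => congrArg closure ?_
  ext x
  constructor
  · rintro ⟨n, hn, rfl⟩
    simp only [mem_ofPred_eq] at hn
    exact ⟨n.toNat, show M < n.toNat by omega, by rw [← h, Int.toNat_of_nonneg (by omega)]⟩
  · rintro ⟨n, hn, rfl⟩
    exact ⟨n, by simpa using hn, h n⟩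

lemma alphaZ_eq_omegaSeq {u : ℤ → X} {r : ℕ → X} (h : ∀ n : ℕ, 0 < n → u (-n) = r n) :
    alphaZ u = omegaSeq r := by
  refine iInter_congr fun M => congrArg closure ?_
  ext x
  constructor
  · rintro ⟨n, hn, rfl⟩
    simp only [mem_ofPred_eq] at hn
    exact ⟨(-n).toNat, show M < (-n).toNat by omega, by
      rw [← h _ (by omega), Int.toNat_of_nonneg (by omega), neg_neg]⟩
  · rintro ⟨n, hn, rfl⟩
    simp only [mem_Ioi] at hn
    exact ⟨-n, by simp only [mem_ofPred_eq]; omega, h n (by omega)⟩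

end Construction

section IntSeq

variable {X Y : Type*} {F : X → X → Y} {l : Filter Y} {u : ℤ → X}

lemma tendsto_atTop_iff_of_natCast {p : ℕ → X} (h : ∀ n : ℕ, u n = p n) :
    Tendsto (fun i : ℤ => F (u i) (u (i + 1))) atTop l ↔
      Tendsto (fun n => F (p n) (p (n + 1))) atTop l := by
  rw [← Nat.map_cast_int_atTop, tendsto_map'_iff]
  refine tendsto_congr fun n => ?_
  simp only [Function.comp_apply, ← h, Nat.cast_succ]

lemma tendsto_atBot_of_neg_natCast {r : ℕ → X} (h : ∀ n : ℕ, 0 < n → u (-n) = r n)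
    (hr : Tendsto (fun n => F (r (n + 1)) (r n)) atTop l) :
    Tendsto (fun i : ℤ => F (u i) (u (i + 1))) atBot l := by
  rw [← tendsto_comp_neg_atTop_iff, ← Nat.map_cast_int_atTop, tendsto_map'_iff,
    ← tendsto_add_atTop_iff_nat 1]
  refine hr.congr' (eventually_atTop.2 ⟨1, fun n hn => ?_⟩)
  simp only [Function.comp_apply]
  rw [show -((n + 1 : ℕ) : ℤ) + 1 = -(n : ℤ) by push_cast; ring, h _ (by omega), h _ hn]

end IntSeq

theorem exists_twoSidedAsymptotic_alphaZ_omegaZ_eq {X : Type*} [MetricSpace X]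
    [TopologicalSpace.SeparableSpace X] {f : X → X} {A : Set X} (hne : A.Nonempty)
    (hA : IsClosed A) (hct : chainTransitive f A) :
    ∃ u : ℤ → X, twoSidedAsymptotic f u ∧ alphaZ u = A ∧ omegaZ u = A := by
  have hct' : ChainTransitiveFor (fun a b => dist (f a) b) A := hct
  obtain ⟨p, hp, hpA⟩ := hct'.exists_tendsto_omegaSeq_eq (fun _ _ => dist_nonneg) hne hA
  obtain ⟨r, hr, hrA⟩ := hct'.flip.exists_tendsto_omegaSeq_eq (fun _ _ => dist_nonneg) hne hA
  set u : ℤ → X := fun i => if 0 ≤ i then p i.toNat else r (-i).toNat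
  have hup : ∀ n : ℕ, u n = p n := fun n => by simp [u]
  have hur : ∀ n : ℕ, 0 < n → u (-n) = r n := fun n hn => by simp [u, hn.ne']
  have hu : twoSidedAsymptotic f u :=
    ⟨(tendsto_atTop_iff_of_natCast (F := fun a b => dist (f a) b) hup).2 hp,
      tendsto_atBot_of_neg_natCast (F := fun a b => dist (f a) b) hur hr⟩
  exact ⟨u, hu, (alphaZ_eq_omegaSeq hur).trans hrA, (omegaZ_eq_omegaSeq hup).trans hpA⟩

theorem stmt11 {X : Type*} [MetricSpace X] [CompactSpace X] (f : X → X)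
    (hf : Continuous f) :
    (∀ A : Set X, A.Nonempty → IsClosed A → chainTransitive f A →
      ∃ u : ℤ → X, fullTraj f u ∧ alphaZ u = A ∧ omegaZ u = A) ↔
    (∀ u : ℤ → X, twoSidedAsymptotic f u → alphaZ u = omegaZ u →
      ∃ z : ℤ → X, fullTraj f z ∧ alphaZ z = alphaZ u ∧ omegaZ z = omegaZ u) := by
  constructor
  · intro hP u hu hαω
    have hω : omegaZ u = omegaSeq fun n : ℕ => u n := omegaZ_eq_omegaSeq fun _ => rfl
    have hv := (tendsto_atTop_iff_of_natCast (F := fun a b => dist (f a) b) fun _ => rfl).1 hu.1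
    obtain ⟨z, hz, hzα, hzω⟩ := hP _ (omegaSeq_nonempty _) (isClosed_omegaSeq _)
      (chainTransitive_omegaSeq (CompactSpace.uniformContinuous_of_continuous hf) hv)
    exact ⟨z, hz, by rw [hzα, hαω, hω], by rw [hzω, hω]⟩
  · intro hS A hne hA hct
    obtain ⟨u, hu, huα, huω⟩ := exists_twoSidedAsymptotic_alphaZ_omegaZ_eq hne hA hct
    obtain ⟨z, hz, hzα, hzω⟩ := hS u hu (huα.trans huω.symm)
    exact ⟨z, hz, hzα.trans huα, hzω.trans huω⟩
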